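/- Let (X_i)_{1≤i≤n} be a finite sequence of supermartingale differences adapted to a filtration (F_i), such that for some constant K > 0 and all i, almost surely E[exp(|X_i|) | F_{i-1}] ≤ K. Then for every ε > 0 there exist 0 < x_0 < x_1 and K_1 > 0, depending only on K and ε, such that: P[S_n/n > x] ≤ exp(−n x²/(4K(1+ε))) if 0 < x < x_0; P[S_n/n > x] ≤ exp(−n x/K_1) if x_0 ≤ x ≤ x_1; and P[S_n/n > x] ≤ exp(−n x/(1+ε)) if x > x_1. -/

import Mathlib

open MeasureTheory ENNReal

/-!
Chernoff's method with a conditional exponential moment. For `0 ≤ λ < 1` one has the scalar bound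
`exp (λ y) ≤ 1 + λ y + c(λ) exp |y|`, so conditionally on `ℱ (i - 1)` the supermartingale property
kills the linear term and `E[exp (λ Xᵢ) | ℱ (i - 1)] ≤ 1 + c(λ) K ≤ exp (c(λ) K)`. Peeling off one
factor at a time gives `E[exp (λ Sₙ)] ≤ exp (n c(λ) K)`, and Markov's inequality yields
`P[Sₙ / n > x] ≤ exp (-n (λ x - c(λ) K))`. The three regimes come from three choices of `λ`:
`λ = x / (2K(1+ε))` (where `c(λ) ≤ λ²`), `λ = 1/4`, and `λ = 1 - ε / (2(1+ε))`.
-/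

/-- The coefficient `c(λ)` of the bound `exp (λ y) ≤ 1 + λ y + c(λ) exp |y|` for `0 ≤ λ < 1`. -/
noncomputable def expRemainderCoeff (l : ℝ) : ℝ := 4 * l ^ 2 / ((1 - l) ^ 2 * Real.exp 2)

lemma expRemainderCoeff_nonneg (l : ℝ) : 0 ≤ expRemainderCoeff l := by
  unfold expRemainderCoeff; positivity

lemma expRemainderCoeff_le_sq {l : ℝ} (hl : l ≤ 1 / 4) : expRemainderCoeff l ≤ l ^ 2 := by
  have he : (8 / 3 : ℝ) < Real.exp 1 := lt_trans (by norm_num) Real.exp_one_gt_d9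
  have he2 : Real.exp 2 = Real.exp 1 ^ 2 := by rw [← Real.exp_nat_mul]; norm_num
  have hl' : 3 / 4 ≤ 1 - l := by linarith
  have hden : 4 ≤ (1 - l) ^ 2 * Real.exp 1 ^ 2 :=
    calc (4 : ℝ) = (3 / 4) ^ 2 * (8 / 3) ^ 2 := by norm_num
      _ ≤ (1 - l) ^ 2 * Real.exp 1 ^ 2 := by gcongr
  rw [expRemainderCoeff, div_le_iff₀ (by positivity), he2]
  nlinarith [sq_nonneg l]

lemma expRemainderCoeff_le_inv_sq {l : ℝ} (hl0 : 0 ≤ l) (hl1 : l < 1) :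
    expRemainderCoeff l ≤ 1 / (1 - l) ^ 2 := by
  have he : 2 ≤ Real.exp 1 := by linarith [Real.add_one_le_exp 1]
  have he2 : Real.exp 2 = Real.exp 1 ^ 2 := by rw [← Real.exp_nat_mul]; norm_num
  have hl : 0 < 1 - l := by linarith
  have he4 : 4 ≤ Real.exp 1 ^ 2 := by nlinarith
  have hl2 : l ^ 2 ≤ 1 := by nlinarith
  rw [expRemainderCoeff, he2, div_le_div_iff₀ (by positivity) (by positivity)]
  nlinarith [sq_nonneg (1 - l)]

lemma Real.exp_le_one_add_add_sq_mul_exp_abs (s : ℝ) :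
    Real.exp s ≤ 1 + s + s ^ 2 * Real.exp |s| := by
  have hinv : Real.exp s * (1 - s) ≤ 1 :=
    calc Real.exp s * (1 - s) ≤ Real.exp s * Real.exp (-s) :=
          mul_le_mul_of_nonneg_left (Real.one_sub_le_exp_neg s) (Real.exp_pos s).le
      _ = 1 := by rw [← Real.exp_add, add_neg_cancel, Real.exp_zero]
  have hsq : s * (Real.exp s - 1) ≤ s ^ 2 * Real.exp |s| := by
    rcases le_or_gt 0 s with hs | hs
    · rw [abs_of_nonneg hs]
      nlinarith
    · have h1 : s ≤ Real.exp s - 1 := by linarith [Real.add_one_le_exp s]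
      have h2 : 1 ≤ Real.exp |s| := Real.one_le_exp (abs_nonneg s)
      nlinarith
  linarith

lemma Real.sq_le_four_mul_exp_sub_two {u : ℝ} (hu : 0 ≤ u) : u ^ 2 ≤ 4 * Real.exp (u - 2) := by
  have h : u / 2 ≤ Real.exp (u / 2 - 1) := by linarith [Real.add_one_le_exp (u / 2 - 1)]
  calc u ^ 2 = 4 * (u / 2) ^ 2 := by ring
    _ ≤ 4 * Real.exp (u / 2 - 1) ^ 2 := by gcongr
    _ = 4 * Real.exp (u - 2) := by rw [← Real.exp_nat_mul]; ring_nf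

lemma Real.exp_mul_le_one_add_add_expRemainderCoeff_mul {l : ℝ} (hl0 : 0 ≤ l) (hl1 : l < 1)
    (y : ℝ) : Real.exp (l * y) ≤ 1 + l * y + expRemainderCoeff l * Real.exp |y| := by
  refine (Real.exp_le_one_add_add_sq_mul_exp_abs (l * y)).trans (add_le_add_right ?_ _)
  have hl : 0 < 1 - l := by linarith
  have hu := Real.sq_le_four_mul_exp_sub_two (mul_nonneg hl.le (abs_nonneg y))
  rw [abs_mul, abs_of_nonneg hl0, expRemainderCoeff, div_mul_eq_mul_div,
    le_div_iff₀ (by positivity)]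
  calc (l * y) ^ 2 * Real.exp (l * |y|) * ((1 - l) ^ 2 * Real.exp 2)
      = ((1 - l) * |y|) ^ 2 * (l ^ 2 * Real.exp (l * |y|) * Real.exp 2) := by
        rw [mul_pow, mul_pow, ← sq_abs y]; ring
    _ ≤ 4 * Real.exp ((1 - l) * |y| - 2) * (l ^ 2 * Real.exp (l * |y|) * Real.exp 2) := by
        gcongr
    _ = 4 * l ^ 2 * Real.exp |y| := by
        rw [mul_assoc (l ^ 2), ← Real.exp_add, mul_comm (l ^ 2), ← mul_assoc, mul_assoc 4,
          ← Real.exp_add]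
        ring_nf

/-- The density `Z` makes `μ.withDensity Z ≤ C • μ` on `m`-measurable sets, and the integral of an
`m`-measurable `Y` only sees the trimmed measures. -/
lemma lintegral_mul_le_of_condExp_le {Ω : Type*} {m m0 : MeasurableSpace Ω} {μ : Measure Ω}
    [IsFiniteMeasure μ] (hm : m ≤ m0) {Y : Ω → ℝ≥0∞} (hY : Measurable[m] Y) {Z : Ω → ℝ}
    (hZ0 : 0 ≤ᵐ[μ] Z) (hZ : Integrable Z μ) {C : ℝ} (hC : μ[Z|m] ≤ᵐ[μ] fun _ => C) :
    ∫⁻ ω, Y ω * ENNReal.ofReal (Z ω) ∂μ ≤ ENNReal.ofReal C * ∫⁻ ω, Y ω ∂μ := by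
  set ν := μ.withDensity fun ω => ENNReal.ofReal (Z ω)
  have hν : ν.trim hm ≤ ENNReal.ofReal C • μ.trim hm := by
    refine Measure.le_iff.2 fun s hs => ?_
    have hZs : ∫⁻ ω in s, ENNReal.ofReal (Z ω) ∂μ = ENNReal.ofReal (∫ ω in s, μ[Z|m] ω ∂μ) := by
      rw [setIntegral_condExp hm hZ hs,
        ofReal_integral_eq_lintegral_ofReal hZ.integrableOn (ae_restrict_of_ae hZ0)]
    rw [trim_measurableSet_eq hm hs, Measure.smul_apply, trim_measurableSet_eq hm hs,
      withDensity_apply _ (hm s hs), hZs, ofReal_integral_eq_lintegral_ofReal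
        integrable_condExp.integrableOn (ae_restrict_of_ae (condExp_nonneg hZ0)), smul_eq_mul,
      ← setLIntegral_const]
    exact lintegral_mono_ae (ae_restrict_of_ae (hC.mono fun ω h => ENNReal.ofReal_le_ofReal h))
  calc ∫⁻ ω, Y ω * ENNReal.ofReal (Z ω) ∂μ = ∫⁻ ω, Y ω ∂ν.trim hm := by
        rw [lintegral_trim hm hY, lintegral_withDensity_eq_lintegral_mul₀
          hZ.aemeasurable.ennreal_ofReal (hY.mono hm le_rfl).aemeasurable]
        simp only [Pi.mul_apply, mul_comm]
    _ ≤ ∫⁻ ω, Y ω ∂(ENNReal.ofReal C • μ.trim hm) := lintegral_mono' hν le_rfl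
    _ = ENNReal.ofReal C * ∫⁻ ω, Y ω ∂μ := by
        rw [lintegral_smul_measure, lintegral_trim hm hY, smul_eq_mul]

structure IsExpBoundedSupermartingaleDiff {Ω : Type*} {m0 : MeasurableSpace Ω}
    (m : MeasurableSpace Ω) (μ : Measure[m0] Ω) (K : ℝ) (X : Ω → ℝ) : Prop where
  integrable : Integrable X μ
  integrable_exp_abs : Integrable (fun ω => Real.exp |X ω|) μ
  condExp_nonpos : ∀ᵐ ω ∂μ, μ[X|m] ω ≤ 0
  condExp_exp_abs_le : ∀ᵐ ω ∂μ, μ[fun ω => Real.exp |X ω| | m] ω ≤ K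

namespace IsExpBoundedSupermartingaleDiff

variable {Ω : Type*} {m m0 : MeasurableSpace Ω} {μ : Measure Ω} {K : ℝ} {X : Ω → ℝ}

lemma integrable_exp_mul (hX : IsExpBoundedSupermartingaleDiff m μ K X) {l : ℝ} (hl : |l| ≤ 1) :
    Integrable (fun ω => Real.exp (l * X ω)) μ := by
  refine hX.integrable_exp_abs.mono (Real.continuous_exp.comp_aestronglyMeasurable
    (hX.integrable.aestronglyMeasurable.const_mul l)) (ae_of_all _ fun ω => ?_)
  simp only [Real.norm_eq_abs, Real.abs_exp, Real.exp_le_exp]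
  calc l * X ω ≤ |l * X ω| := le_abs_self _
    _ = |l| * |X ω| := abs_mul _ _
    _ ≤ |X ω| := mul_le_of_le_one_left (abs_nonneg _) hl

lemma condExp_exp_mul_le [IsFiniteMeasure μ] (hm : m ≤ m0)
    (hX : IsExpBoundedSupermartingaleDiff m μ K X) {l : ℝ} (hl0 : 0 ≤ l) (hl1 : l < 1) :
    ∀ᵐ ω ∂μ, μ[fun ω => Real.exp (l * X ω)|m] ω ≤ 1 + expRemainderCoeff l * K := by
  set c := expRemainderCoeff l
  have hlin : Integrable ((fun _ => (1 : ℝ)) + l • X) μ :=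
    (integrable_const 1).add (hX.integrable.smul l)
  have hquad : Integrable (c • fun ω => Real.exp |X ω|) μ := hX.integrable_exp_abs.smul c
  have hmono := condExp_mono (m := m) (hX.integrable_exp_mul (abs_le.2 ⟨by linarith, hl1.le⟩))
    (hlin.add hquad) (ae_of_all μ fun ω =>
      Real.exp_mul_le_one_add_add_expRemainderCoeff_mul hl0 hl1 (X ω))
  filter_upwards [hmono, condExp_add hlin hquad m,
    condExp_add (integrable_const (1 : ℝ)) (hX.integrable.smul l) m,
    condExp_smul l X m, condExp_smul c (fun ω => Real.exp |X ω|) m,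
    hX.condExp_nonpos, hX.condExp_exp_abs_le] with ω hmono hsum hlin hX1 hX2 hX0 hXK
  simp only [hsum, Pi.add_apply, hlin, hX1, hX2, condExp_const hm, Pi.smul_apply,
    smul_eq_mul] at hmono
  have hdrift : l * μ[X|m] ω ≤ 0 := mul_nonpos_of_nonneg_of_nonpos hl0 hX0
  have hmoment := mul_le_mul_of_nonneg_left hXK (expRemainderCoeff_nonneg l)
  linarith

end IsExpBoundedSupermartingaleDiff

def IsChernoffRate (K x r : ℝ) : Prop :=
  ∃ l, 0 ≤ l ∧ l < 1 ∧ r ≤ l * x - expRemainderCoeff l * K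

lemma isChernoffRate_sq_div {K ε x : ℝ} (hK : 0 < K) (hε : 0 < ε) (hx : 0 < x)
    (hxK : x < K / 2) : IsChernoffRate K x (x ^ 2 / (4 * K * (1 + ε))) := by
  set l := x / (2 * K * (1 + ε))
  have hl4 : l ≤ 1 / 4 := by
    rw [div_le_iff₀ (by positivity)]; nlinarith
  refine ⟨l, by positivity, by linarith, ?_⟩
  have hc := mul_le_mul_of_nonneg_right (expRemainderCoeff_le_sq hl4) hK.le
  have hquad : x ^ 2 / (4 * K * (1 + ε)) ≤ l * x - l ^ 2 * K := by
    simp only [l]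
    rw [div_le_iff₀ (by positivity)]
    field_simp
    nlinarith [sq_nonneg x, mul_pos hK hε]
  linarith

lemma isChernoffRate_div_eight {K x : ℝ} (hK : 0 ≤ K) (hxK : K / 2 ≤ x) :
    IsChernoffRate K x (x / 8) := by
  refine ⟨1 / 4, by norm_num, by norm_num, ?_⟩
  have := mul_le_mul_of_nonneg_right (expRemainderCoeff_le_sq le_rfl) hK
  linarith

lemma isChernoffRate_div_one_add {K ε x : ℝ} (hK : 0 ≤ K) (hε : 0 < ε)
    (hxK : K / (ε / (2 * (1 + ε))) ^ 3 < x) : IsChernoffRate K x (x / (1 + ε)) := by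
  set d := ε / (2 * (1 + ε))
  have hd0 : 0 < d := by positivity
  have hd : d < 1 := by
    rw [div_lt_one (by positivity)]; linarith
  refine ⟨1 - d, by linarith, by linarith, ?_⟩
  have hc : expRemainderCoeff (1 - d) * K ≤ K / d ^ 2 := by
    have := mul_le_mul_of_nonneg_right
      (expRemainderCoeff_le_inv_sq (by linarith) (by linarith : 1 - d < 1)) hK
    rwa [show 1 - (1 - d) = d by ring, one_div_mul_eq_div] at this
  have hdx : K / d ^ 2 ≤ d * x := by
    rw [div_lt_iff₀ (by positivity)] at hxK
    rw [div_le_iff₀ (by positivity)]; nlinarith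
  have hrate : x / (1 + ε) = (1 - 2 * d) * x := by
    simp only [d]; field_simp; ring
  linarith

section Chernoff

variable {Ω : Type*} {m0 : MeasurableSpace Ω} {μ : Measure Ω} [IsProbabilityMeasure μ]
  {ℱ : Filtration ℕ m0} {X : ℕ → Ω → ℝ} {K l : ℝ}

lemma lintegral_exp_mul_sum_le (hl0 : 0 ≤ l) (hl1 : l < 1) {n : ℕ}
    (hX : ∀ i ∈ Finset.Icc 1 n, StronglyMeasurable[ℱ i] (X i) ∧
      IsExpBoundedSupermartingaleDiff (ℱ (i - 1)) μ K (X i)) :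
    ∫⁻ ω, ENNReal.ofReal (Real.exp (l * ∑ i ∈ Finset.Icc 1 n, X i ω)) ∂μ ≤
      ENNReal.ofReal (Real.exp (n * (expRemainderCoeff l * K))) := by
  induction n with
  | zero => simp
  | succ n ih =>
    have hlast := hX (n + 1) (Finset.right_mem_Icc.2 (Nat.le_add_left 1 n))
    rw [Nat.add_sub_cancel] at hlast
    have hS : Measurable[ℱ n] fun ω => ∑ i ∈ Finset.Icc 1 n, X i ω :=
      Finset.measurable_sum _ fun i hi =>
        ((hX i (Finset.Icc_subset_Icc_right n.le_succ hi)).1.measurable.mono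
          (ℱ.mono (Finset.mem_Icc.1 hi).2) le_rfl)
    calc ∫⁻ ω, ENNReal.ofReal (Real.exp (l * ∑ i ∈ Finset.Icc 1 (n + 1), X i ω)) ∂μ
        = ∫⁻ ω, ENNReal.ofReal (Real.exp (l * ∑ i ∈ Finset.Icc 1 n, X i ω)) *
            ENNReal.ofReal (Real.exp (l * X (n + 1) ω)) ∂μ := by
          simp_rw [Finset.sum_Icc_succ_top (Nat.le_add_left 1 n), mul_add, Real.exp_add,
            ENNReal.ofReal_mul (Real.exp_pos _).le]
      _ ≤ ENNReal.ofReal (1 + expRemainderCoeff l * K) *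
            ENNReal.ofReal (Real.exp (n * (expRemainderCoeff l * K))) :=
          (lintegral_mul_le_of_condExp_le (ℱ.le n) (hS.const_mul l).exp.ennreal_ofReal
            (ae_of_all _ fun ω => (Real.exp_pos _).le)
            (hlast.2.integrable_exp_mul (abs_le.2 ⟨by linarith, hl1.le⟩))
            (hlast.2.condExp_exp_mul_le (ℱ.le n) hl0 hl1)).trans
          (by gcongr; exact ih fun i hi => hX i (Finset.Icc_subset_Icc_right n.le_succ hi))
      _ ≤ ENNReal.ofReal (Real.exp ((n + 1 : ℕ) * (expRemainderCoeff l * K))) := by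
          rw [← ENNReal.ofReal_mul' (Real.exp_pos _).le, Nat.cast_succ, add_one_mul,
            Real.exp_add, mul_comm]
          gcongr
          linarith [Real.add_one_le_exp (expRemainderCoeff l * K)]

lemma measure_sum_div_gt_le_of_isChernoffRate {n : ℕ} (hn : 1 ≤ n)
    (hX : ∀ i ∈ Finset.Icc 1 n, StronglyMeasurable[ℱ i] (X i) ∧
      IsExpBoundedSupermartingaleDiff (ℱ (i - 1)) μ K (X i)) {x r : ℝ}
    (hr : IsChernoffRate K x r) :
    μ {ω | (∑ i ∈ Finset.Icc 1 n, X i ω) / n > x} ≤ ENNReal.ofReal (Real.exp (-(n * r))) := by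
  obtain ⟨l, hl0, hl1, hlr⟩ := hr
  have hn0 : (0 : ℝ) < n := by exact_mod_cast hn
  set S := fun ω => ∑ i ∈ Finset.Icc 1 n, X i ω
  have hS : Measurable S := Finset.measurable_sum _ fun i hi =>
    ((hX i hi).1.measurable.mono (ℱ.le i) le_rfl)
  have hsub : {ω | S ω / n > x} ⊆
      {ω | ENNReal.ofReal (Real.exp (l * (n * x))) ≤ ENNReal.ofReal (Real.exp (l * S ω))} := by
    intro ω hω
    rw [Set.mem_ofPred_eq, gt_iff_lt, lt_div_iff₀ hn0] at hω
    exact ENNReal.ofReal_le_ofReal (Real.exp_le_exp.2 (by nlinarith))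
  calc μ {ω | S ω / n > x}
      ≤ (∫⁻ ω, ENNReal.ofReal (Real.exp (l * S ω)) ∂μ) /
          ENNReal.ofReal (Real.exp (l * (n * x))) :=
        (measure_mono hsub).trans (meas_ge_le_lintegral_div
          (hS.const_mul l).exp.ennreal_ofReal.aemeasurable (by simp [Real.exp_pos]) ofReal_ne_top)
    _ ≤ ENNReal.ofReal (Real.exp (n * (expRemainderCoeff l * K))) /
          ENNReal.ofReal (Real.exp (l * (n * x))) := by
        gcongr; exact lintegral_exp_mul_sum_le hl0 hl1 hX
    _ = ENNReal.ofReal (Real.exp (-(n * (l * x - expRemainderCoeff l * K)))) := by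
        rw [← ENNReal.ofReal_div_of_pos (Real.exp_pos _), ← Real.exp_sub]
        ring_nf
    _ ≤ ENNReal.ofReal (Real.exp (-(n * r))) := by gcongr

end Chernoff

/-- Corollary 2.2: refined deviation bounds for supermartingale differences, with
thresholds `x₀ < x₁` and constant `K₁` depending only on `K` and `ε`. -/
theorem supermartingale_refined_deviation_bounds (K ε : ℝ) (hK : 0 < K) (hε : 0 < ε) :
    ∃ x₀ x₁ K₁ : ℝ, 0 < x₀ ∧ x₀ < x₁ ∧ 0 < K₁ ∧
      ∀ {Ω : Type*} {m0 : MeasurableSpace Ω} (μ : Measure Ω), IsProbabilityMeasure μ →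
      ∀ (ℱ : Filtration ℕ m0) (n : ℕ) (X : ℕ → Ω → ℝ), 1 ≤ n →
        (∀ i ∈ Finset.Icc 1 n, StronglyMeasurable[ℱ i] (X i)) →
        (∀ i ∈ Finset.Icc 1 n, Integrable (X i) μ) →
        (∀ i ∈ Finset.Icc 1 n, ∀ᵐ ω ∂μ, (μ[X i|ℱ (i - 1)]) ω ≤ 0) →
        (∀ i ∈ Finset.Icc 1 n, Integrable (fun ω => Real.exp |X i ω|) μ) →
        (∀ i ∈ Finset.Icc 1 n,
          ∀ᵐ ω ∂μ, (μ[fun ω' => Real.exp (|X i ω'|)|ℱ (i - 1)]) ω ≤ K) →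
        ∀ x : ℝ,
          (0 < x → x < x₀ →
            μ {ω | (∑ i ∈ Finset.Icc 1 n, X i ω) / n > x} ≤
              ENNReal.ofReal (Real.exp (-(n * x ^ 2 / (4 * K * (1 + ε)))))) ∧
          (x₀ ≤ x → x ≤ x₁ →
            μ {ω | (∑ i ∈ Finset.Icc 1 n, X i ω) / n > x} ≤
              ENNReal.ofReal (Real.exp (-(n * x / K₁)))) ∧
          (x₁ < x →
            μ {ω | (∑ i ∈ Finset.Icc 1 n, X i ω) / n > x} ≤
              ENNReal.ofReal (Real.exp (-(n * x / (1 + ε))))) := by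
  have hd : 0 < ε / (2 * (1 + ε)) ∧ ε / (2 * (1 + ε)) < 1 :=
    ⟨by positivity, (div_lt_one (by positivity)).2 (by linarith)⟩
  refine ⟨K / 2, K / (ε / (2 * (1 + ε))) ^ 3, 8, by positivity,
    div_lt_div_of_pos_left hK (pow_pos hd.1 3)
      ((pow_lt_one₀ hd.1.le hd.2 three_ne_zero).trans one_lt_two), by norm_num, ?_⟩
  intro Ω m0 μ hμ ℱ n X hn hmeas hint hsup hexpint hexpcond x
  have hX : ∀ i ∈ Finset.Icc 1 n, StronglyMeasurable[ℱ i] (X i) ∧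
      IsExpBoundedSupermartingaleDiff (ℱ (i - 1)) μ K (X i) := fun i hi =>
    ⟨hmeas i hi, hint i hi, hexpint i hi, hsup i hi, hexpcond i hi⟩
  refine ⟨fun hx hx₀ => ?_, fun hx₀ _ => ?_, fun hx₁ => ?_⟩ <;> rw [mul_div_assoc]
  · exact measure_sum_div_gt_le_of_isChernoffRate hn hX (isChernoffRate_sq_div hK hε hx hx₀)
  · exact measure_sum_div_gt_le_of_isChernoffRate hn hX (isChernoffRate_div_eight hK.le hx₀)
  · exact measure_sum_div_gt_le_of_isChernoffRate hn hX (isChernoffRate_div_one_add hK.le hε hx₁)
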